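/- Let Θ̂ minimize ‖Θ‖_* over matrices Θ ∈ ℝ^{k×p} satisfying X(Θ) = X(Θ*), where X is linear and Θ* has rank r. Write the error Δ = Θ̂ − Θ* using the decomposition Δ = Δ' + Δ'' from the SVD-block construction (with rank(Δ') ≤ 2r and ‖Θ* + Δ''‖_* = ‖Θ*‖_* + ‖Δ''‖_*). Then ‖Δ''‖_* ≤ ‖Δ'‖_*, and consequently ‖Δ‖_* ≤ 2√(2r)·‖Δ‖_F. -/

import Mathlib

/-!
The nuclear norm is dual to the operator norm: `tr (Wᴴ A) ≤ ‖A‖_*` for every contraction `W`,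
with equality for `W = A (AᴴA)^{-1/2}` (pseudo-inverse square root, taken in an eigenbasis of
`AᴴA`). Hence `‖·‖_*` is subadditive. Optimality of `Θ̂` against the feasible point `Θ*`, the
reverse triangle inequality and the decomposability of `Θ* + Δ''` give `‖Δ''‖_* ≤ ‖Δ'‖_*`,
so `‖Δ‖_* ≤ 2 ‖Δ'‖_*`; Cauchy–Schwarz over the `rank Δ'` nonzero singular values of `Δ'`
gives `‖Δ'‖_* ≤ √(rank Δ') ‖Δ'‖_F`.
-/

open Matrix BigOperators

noncomputable def frobNorm {k p : ℕ} (A : Matrix (Fin k) (Fin p) ℝ) : ℝ :=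
  Real.sqrt (∑ i, ∑ j, (A i j) ^ 2)

noncomputable def singVal {k p : ℕ} (A : Matrix (Fin k) (Fin p) ℝ) (i : Fin p) : ℝ :=
  Real.sqrt ((Matrix.isHermitian_conjTranspose_mul_self A).eigenvalues i)

noncomputable def nuclearNorm {k p : ℕ} (A : Matrix (Fin k) (Fin p) ℝ) : ℝ :=
  ∑ i, singVal A i

noncomputable def opNorm {k p : ℕ} (A : Matrix (Fin k) (Fin p) ℝ) : ℝ :=
  ⨆ i, singVal A i

noncomputable def euclNorm {n : ℕ} (v : Fin n → ℝ) : ℝ :=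
  Real.sqrt (∑ i, (v i) ^ 2)

section ColumnNorms

variable {m n : Type*} [Fintype m]

lemma sum_sq_apply_eq_conjTranspose_mul_self_apply (B : Matrix m n ℝ) (i : n) :
    ∑ a, B a i ^ 2 = (Bᴴ * B) i i := by
  simp only [mul_apply, conjTranspose_apply, star_trivial, sq]

lemma conjTranspose_mul_self_mul [Fintype n] (B : Matrix m n ℝ) (V : Matrix n n ℝ) :
    (B * V)ᴴ * (B * V) = star V * (Bᴴ * B) * V := by
  simp only [conjTranspose_mul, star_eq_conjTranspose, Matrix.mul_assoc]

lemma sum_sq_mul_apply_le_one [Fintype n] [DecidableEq n] {W : Matrix m n ℝ}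
    (hW : (1 - Wᴴ * W).PosSemidef) {V : Matrix n n ℝ} (hV : star V * V = 1) (i : n) :
    ∑ a, (W * V) a i ^ 2 ≤ 1 := by
  have hdiag : 0 ≤ (star V * (1 - Wᴴ * W) * V : Matrix n n ℝ) i i := by
    simpa only [star_eq_conjTranspose] using (hW.conjTranspose_mul_mul_same V).diag_nonneg
  rw [Matrix.mul_sub, Matrix.sub_mul, Matrix.mul_one, hV, Matrix.sub_apply, one_apply_eq] at hdiag
  rw [sum_sq_apply_eq_conjTranspose_mul_self_apply, conjTranspose_mul_self_mul]
  linarith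

end ColumnNorms

section Gram

variable {k p : ℕ} (A : Matrix (Fin k) (Fin p) ℝ)

noncomputable def gramEigenvalues : Fin p → ℝ :=
  (isHermitian_conjTranspose_mul_self A).eigenvalues

noncomputable def gramEigenvectors : Matrix (Fin p) (Fin p) ℝ :=
  (isHermitian_conjTranspose_mul_self A).eigenvectorUnitary

lemma gramEigenvalues_nonneg (i : Fin p) : 0 ≤ gramEigenvalues A i :=
  eigenvalues_conjTranspose_mul_self_nonneg A i

lemma star_gramEigenvectors_mul_self : star (gramEigenvectors A) * gramEigenvectors A = 1 :=
  Unitary.coe_star_mul_self _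

lemma gramEigenvectors_mul_star_self : gramEigenvectors A * star (gramEigenvectors A) = 1 :=
  Unitary.coe_mul_star_self _

lemma star_gramEigenvectors_mul_gram_mul :
    star (gramEigenvectors A) * (Aᴴ * A) * gramEigenvectors A = diagonal (gramEigenvalues A) := by
  have := (isHermitian_conjTranspose_mul_self A).conjStarAlgAut_star_eigenvectorUnitary
  rw [Unitary.conjStarAlgAut_star_apply] at this
  exact this

lemma nuclearNorm_eq_sum_sqrt_gramEigenvalues :
    nuclearNorm A = ∑ i, √(gramEigenvalues A i) := rfl

lemma sum_sq_mul_gramEigenvectors_apply (i : Fin p) :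
    ∑ a, (A * gramEigenvectors A) a i ^ 2 = gramEigenvalues A i := by
  rw [sum_sq_apply_eq_conjTranspose_mul_self_apply, conjTranspose_mul_self_mul,
    star_gramEigenvectors_mul_gram_mul, diagonal_apply_eq]

lemma frobNorm_sq_eq_sum_gramEigenvalues : frobNorm A ^ 2 = ∑ i, gramEigenvalues A i := by
  have htrace : (Aᴴ * A).trace = ∑ i, ∑ j, A i j ^ 2 := by
    simp only [trace, diag_apply, ← sum_sq_apply_eq_conjTranspose_mul_self_apply]
    exact Finset.sum_comm
  rw [frobNorm, Real.sq_sqrt (by positivity), ← htrace,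
    (isHermitian_conjTranspose_mul_self A).trace_eq_sum_eigenvalues]
  rfl

lemma trace_conjTranspose_mul_le_nuclearNorm {W : Matrix (Fin k) (Fin p) ℝ}
    (hW : (1 - Wᴴ * W).PosSemidef) : (Wᴴ * A).trace ≤ nuclearNorm A := by
  set V := gramEigenvectors A
  have hrotate : (Wᴴ * A).trace = ∑ i, ∑ a, (W * V) a i * (A * V) a i := by
    calc (Wᴴ * A).trace = (Wᴴ * A * (V * star V)).trace := by
          rw [gramEigenvectors_mul_star_self, Matrix.mul_one]
      _ = ((W * V)ᴴ * (A * V)).trace := by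
          rw [← Matrix.mul_assoc, trace_mul_cycle]
          simp only [conjTranspose_mul, star_eq_conjTranspose, Matrix.mul_assoc]
      _ = _ := by simp only [trace, diag_apply, mul_apply, conjTranspose_apply, star_trivial]
  rw [hrotate, nuclearNorm_eq_sum_sqrt_gramEigenvalues]
  gcongr with i
  calc ∑ a, (W * V) a i * (A * V) a i
      ≤ √(∑ a, (W * V) a i ^ 2) * √(∑ a, (A * V) a i ^ 2) := Real.sum_mul_le_sqrt_mul_sqrt _ _ _
    _ ≤ √(gramEigenvalues A i) := by
        rw [sum_sq_mul_gramEigenvectors_apply]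
        exact mul_le_of_le_one_left (Real.sqrt_nonneg _)
          (Real.sqrt_le_one.mpr (sum_sq_mul_apply_le_one hW (star_gramEigenvectors_mul_self A) i))

-- Since `(√0)⁻¹ = 0`, this is the pseudo-inverse square root of `AᴴA`, vanishing on `ker A`.
noncomputable def gramInvSqrt : Matrix (Fin p) (Fin p) ℝ :=
  gramEigenvectors A * diagonal (fun i => (√(gramEigenvalues A i))⁻¹) * star (gramEigenvectors A)

lemma conjTranspose_gramInvSqrt : (gramInvSqrt A)ᴴ = gramInvSqrt A := by
  simp only [gramInvSqrt, conjTranspose_mul, star_eq_conjTranspose, conjTranspose_conjTranspose,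
    diagonal_conjTranspose, star_trivial, Matrix.mul_assoc]

lemma gramInvSqrt_mul_gram :
    gramInvSqrt A * (Aᴴ * A) =
      gramEigenvectors A * diagonal (fun i => √(gramEigenvalues A i)) *
        star (gramEigenvectors A) := by
  set V := gramEigenvectors A
  calc gramInvSqrt A * (Aᴴ * A)
      = V * diagonal (fun i => (√(gramEigenvalues A i))⁻¹) * (star V * (Aᴴ * A) * V) * star V := by
        simp only [gramInvSqrt, V, Matrix.mul_assoc, gramEigenvectors_mul_star_self, Matrix.mul_one]
    _ = _ := by
        rw [star_gramEigenvectors_mul_gram_mul, Matrix.mul_assoc V, diagonal_mul_diagonal]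
        simp only [inv_mul_eq_div, Real.div_sqrt]

lemma posSemidef_one_sub_conjTranspose_mul_self_mul_gramInvSqrt :
    (1 - (A * gramInvSqrt A)ᴴ * (A * gramInvSqrt A)).PosSemidef := by
  set V := gramEigenvectors A
  set d := gramEigenvalues A
  have hgram : (A * gramInvSqrt A)ᴴ * (A * gramInvSqrt A)
      = V * diagonal (fun i => √(d i) * (√(d i))⁻¹) * star V := by
    calc (A * gramInvSqrt A)ᴴ * (A * gramInvSqrt A) = gramInvSqrt A * (Aᴴ * A) * gramInvSqrt A := by
          rw [conjTranspose_mul, conjTranspose_gramInvSqrt]; simp only [Matrix.mul_assoc]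
      _ = V * diagonal (fun i => √(d i)) * (star V * V) * diagonal (fun i => (√(d i))⁻¹) *
            star V := by
          rw [gramInvSqrt_mul_gram]; simp only [gramInvSqrt, V, d, Matrix.mul_assoc]
      _ = _ := by
          rw [star_gramEigenvectors_mul_self, Matrix.mul_one, Matrix.mul_assoc V,
            diagonal_mul_diagonal]
  have hsub : 1 - (A * gramInvSqrt A)ᴴ * (A * gramInvSqrt A)
      = V * diagonal (fun i => 1 - √(d i) * (√(d i))⁻¹) * star V := by
    rw [hgram, ← diagonal_one, ← diagonal_sub, Matrix.mul_sub, Matrix.sub_mul, diagonal_one,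
      Matrix.mul_one, gramEigenvectors_mul_star_self]
  rw [hsub]
  simpa only [star_eq_conjTranspose] using
    (PosSemidef.diagonal fun i => sub_nonneg.mpr mul_inv_le_one).mul_mul_conjTranspose_same V

lemma trace_conjTranspose_mul_gramInvSqrt_mul :
    ((A * gramInvSqrt A)ᴴ * A).trace = nuclearNorm A := by
  rw [conjTranspose_mul, conjTranspose_gramInvSqrt, Matrix.mul_assoc, gramInvSqrt_mul_gram,
    trace_mul_cycle, star_gramEigenvectors_mul_self, Matrix.one_mul, trace_diagonal]
  rfl

lemma frobNorm_nonneg : 0 ≤ frobNorm A := Real.sqrt_nonneg _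

lemma nuclearNorm_neg : nuclearNorm (-A) = nuclearNorm A := by
  have hgram : gramEigenvalues (-A) = gramEigenvalues A :=
    (IsHermitian.eigenvalues_eq_eigenvalues_iff _ _).mpr (by simp)
  simp only [nuclearNorm_eq_sum_sqrt_gramEigenvalues, hgram]

lemma nuclearNorm_add_le (B : Matrix (Fin k) (Fin p) ℝ) :
    nuclearNorm (A + B) ≤ nuclearNorm A + nuclearNorm B := by
  have hW := posSemidef_one_sub_conjTranspose_mul_self_mul_gramInvSqrt (A + B)
  rw [← trace_conjTranspose_mul_gramInvSqrt_mul, Matrix.mul_add, trace_add]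
  exact add_le_add (trace_conjTranspose_mul_le_nuclearNorm A hW)
    (trace_conjTranspose_mul_le_nuclearNorm B hW)

lemma nuclearNorm_le_sqrt_rank_mul_frobNorm : nuclearNorm A ≤ √A.rank * frobNorm A := by
  set d := gramEigenvalues A
  set s := Finset.univ.filter fun i => d i ≠ 0
  have hsupport : nuclearNorm A = ∑ i ∈ s, √(d i) := by
    rw [nuclearNorm_eq_sum_sqrt_gramEigenvalues]
    refine (Finset.sum_filter_of_ne fun i _ h => ?_).symm
    contrapose! h
    exact Real.sqrt_eq_zero_of_nonpos h.le
  have hrank : A.rank = s.card := by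
    rw [← rank_conjTranspose_mul_self,
      (isHermitian_conjTranspose_mul_self A).rank_eq_card_non_zero_eigs, Fintype.card_subtype]
    rfl
  have hsq : ∑ i ∈ s, √(d i) ^ 2 ≤ frobNorm A ^ 2 := by
    rw [frobNorm_sq_eq_sum_gramEigenvalues]
    calc ∑ i ∈ s, √(d i) ^ 2 = ∑ i ∈ s, d i :=
          Finset.sum_congr rfl fun i _ => Real.sq_sqrt (gramEigenvalues_nonneg A i)
      _ ≤ ∑ i, d i := Finset.sum_le_univ_sum_of_nonneg (gramEigenvalues_nonneg A)
  rw [hsupport]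
  calc ∑ i ∈ s, √(d i) = √((∑ i ∈ s, √(d i)) ^ 2) := (Real.sqrt_sq (by positivity)).symm
    _ ≤ √(s.card * frobNorm A ^ 2) :=
        Real.sqrt_le_sqrt (sq_sum_le_card_mul_sum_sq.trans (by gcongr))
    _ = √A.rank * frobNorm A := by
        rw [Real.sqrt_mul (Nat.cast_nonneg _), Real.sqrt_sq (frobNorm_nonneg A), hrank]

end Gram

theorem stmt_13_general {k p N : ℕ}
    (X : Matrix (Fin k) (Fin p) ℝ →ₗ[ℝ] (Fin N → ℝ))
    (Θs Θhat : Matrix (Fin k) (Fin p) ℝ) (r : ℕ)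
    (hmin : ∀ Θ : Matrix (Fin k) (Fin p) ℝ, X Θ = X Θs → nuclearNorm Θhat ≤ nuclearNorm Θ)
    (Δ Δ' Δ'' : Matrix (Fin k) (Fin p) ℝ)
    (hΔ : Δ = Θhat - Θs)
    (hdecomp : Δ = Δ' + Δ'')
    (hrank' : Δ'.rank ≤ 2 * r)
    (hfrob : frobNorm Δ' ≤ frobNorm Δ)
    (hadd : nuclearNorm (Θs + Δ'') = nuclearNorm Θs + nuclearNorm Δ'') :
    nuclearNorm Δ'' ≤ nuclearNorm Δ' ∧
    nuclearNorm Δ ≤ 2 * Real.sqrt (2 * r) * frobNorm Δ := by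
  have hopt : nuclearNorm Θhat ≤ nuclearNorm Θs := hmin Θs rfl
  have hcone : nuclearNorm Δ'' ≤ nuclearNorm Δ' := by
    have hshift : Θs + Δ'' = Θhat + -Δ' := by
      have hΘhat : Θhat = Θs + (Δ' + Δ'') := by rw [← hdecomp, hΔ]; abel
      rw [hΘhat]; abel
    have := nuclearNorm_add_le Θhat (-Δ')
    rw [← hshift, hadd, nuclearNorm_neg] at this
    linarith
  refine ⟨hcone, ?_⟩
  have hrank : (Δ'.rank : ℝ) ≤ 2 * r := by exact_mod_cast hrank'
  calc nuclearNorm Δ ≤ nuclearNorm Δ' + nuclearNorm Δ'' := hdecomp ▸ nuclearNorm_add_le Δ' Δ''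
    _ ≤ 2 * nuclearNorm Δ' := by linarith
    _ ≤ 2 * (√Δ'.rank * frobNorm Δ') := by gcongr; exact nuclearNorm_le_sqrt_rank_mul_frobNorm Δ'
    _ ≤ 2 * (√(2 * r) * frobNorm Δ) := by gcongr; exact frobNorm_nonneg Δ'
    _ = 2 * Real.sqrt (2 * r) * frobNorm Δ := by ring

theorem stmt_13 {k p N : ℕ}
    (X : Matrix (Fin k) (Fin p) ℝ →ₗ[ℝ] (Fin N → ℝ))
    (Θs Θhat : Matrix (Fin k) (Fin p) ℝ) (r : ℕ)
    (hrank : Θs.rank = r)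
    (hfeas : X Θhat = X Θs)
    (hmin : ∀ Θ : Matrix (Fin k) (Fin p) ℝ, X Θ = X Θs → nuclearNorm Θhat ≤ nuclearNorm Θ)
    (Δ Δ' Δ'' : Matrix (Fin k) (Fin p) ℝ)
    (hΔ : Δ = Θhat - Θs)
    (hdecomp : Δ = Δ' + Δ'')
    (hrank' : Δ'.rank ≤ 2 * r)
    (hfrob : frobNorm Δ' ≤ frobNorm Δ)
    (hadd : nuclearNorm (Θs + Δ'') = nuclearNorm Θs + nuclearNorm Δ'') :
    nuclearNorm Δ'' ≤ nuclearNorm Δ' ∧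
    nuclearNorm Δ ≤ 2 * Real.sqrt (2 * r) * frobNorm Δ :=
  stmt_13_general X Θs Θhat r hmin Δ Δ' Δ'' hΔ hdecomp hrank' hfrob hadd
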